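/- Let A be an invertible n×n real matrix whose smallest singular value exceeds 1. Then the Picard iteration x^{(k+1)} = A^{-1}(|x^{(k)}| + b) converges to the unique solution of Ax - |x| = b for any initial vector x^{(0)} ∈ ℝⁿ. -/

import Mathlib

/-!
The bound `c ‖x‖ ≤ ‖A x‖` with `c > 1` makes `A` injective, hence invertible, and makes `A⁻¹`
`c⁻¹`-Lipschitz for the Euclidean norm. Since `x ↦ |x|` is `1`-Lipschitz, the Picard map
`x ↦ A⁻¹ (|x| + b)` is a contraction, and the Banach fixed point theorem gives its unique fixed
point, i.e. the unique solution of `A x - |x| = b`, as the limit of the iterates from any start.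
The iteration lives on `Fin n → ℝ`, whose (product) topology is that of `EuclideanSpace ℝ (Fin n)`,
so the contraction argument is run there and transported back.
-/

open Matrix Filter Function WithLp

theorem ContractingWith.exists_unique_isFixedPt_tendsto_iterate_of_semiconj
    {α β : Type*} [TopologicalSpace α] [MetricSpace β] [CompleteSpace β] [Nonempty β]
    {K : NNReal} {g : β → β} (hg : ContractingWith K g) (e : β ≃ₜ α) {f : α → α}
    (hfg : Semiconj e g f) :
    ∃ x, IsFixedPt f x ∧ (∀ y, IsFixedPt f y → y = x) ∧
      ∀ x₀, Tendsto (fun k => f^[k] x₀) atTop (nhds x) := by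
  have hgf : Semiconj e.symm f g := fun y => by
    rw [← e.apply_symm_apply y, ← hfg, e.symm_apply_apply, e.symm_apply_apply]
  refine ⟨e (fixedPoint g hg), hg.fixedPoint_isFixedPt.map hfg, fun y hy => ?_, fun x₀ => ?_⟩
  · rw [← hg.fixedPoint_unique (hy.map hgf), e.apply_symm_apply]
  · have hiter : ∀ k, e (g^[k] (e.symm x₀)) = f^[k] x₀ := fun k => by
      rw [(hfg.iterate_right k).eq, e.apply_symm_apply]
    simpa only [comp_def, hiter] using
      (e.continuous.tendsto _).comp (hg.tendsto_iterate_fixedPoint (e.symm x₀))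

theorem EuclideanSpace.lipschitzWith_abs {ι : Type*} [Fintype ι] :
    LipschitzWith 1 (fun x : EuclideanSpace ℝ ι => toLp 2 (fun i => |x i|)) := by
  refine LipschitzWith.of_dist_le_mul fun x y => ?_
  rw [NNReal.coe_one, one_mul, EuclideanSpace.dist_eq, EuclideanSpace.dist_eq]
  gcongr with i
  simpa only [Real.dist_eq] using abs_abs_sub_abs_le_abs_sub (x i) (y i)

section

variable {ι : Type*} [Fintype ι] [DecidableEq ι] {A : Matrix ι ι ℝ} {c : ℝ}
  {p : ENNReal} [Fact (1 ≤ p)]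

theorem Matrix.isUnit_of_le_norm_toLp_mulVec (hc : 0 < c)
    (hA : ∀ x, c * ‖toLp p x‖ ≤ ‖toLp p (A *ᵥ x)‖) : IsUnit A := by
  refine mulVec_injective_iff_isUnit.1 fun x y hxy => ?_
  have h := hA (x - y)
  rw [mulVec_sub, hxy, sub_self, toLp_zero, norm_zero] at h
  have : toLp p (x - y) = 0 := norm_le_zero_iff.1 (nonpos_of_mul_nonpos_right h hc)
  exact sub_eq_zero.1 (toLp_injective p (this.trans (toLp_zero p).symm))

theorem Matrix.norm_toLp_inv_mulVec_le (hc : 0 < c)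
    (hA : ∀ x, c * ‖toLp p x‖ ≤ ‖toLp p (A *ᵥ x)‖) (y : ι → ℝ) :
    ‖toLp p (A⁻¹ *ᵥ y)‖ ≤ c⁻¹ * ‖toLp p y‖ := by
  have hdet := (isUnit_iff_isUnit_det A).1 (isUnit_of_le_norm_toLp_mulVec hc hA)
  have h := hA (A⁻¹ *ᵥ y)
  rw [mulVec_mulVec, mul_nonsing_inv A hdet, one_mulVec] at h
  rwa [inv_mul_eq_div, le_div_iff₀ hc, mul_comm]

theorem Matrix.contractingWith_inv_mulVec_abs_add (hc : 1 < c)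
    (hA : ∀ x, c * ‖toLp 2 x‖ ≤ ‖toLp 2 (A *ᵥ x)‖) (b : ι → ℝ) :
    ContractingWith (Real.toNNReal c⁻¹)
      (fun x : EuclideanSpace ℝ ι => toLp 2 (A⁻¹ *ᵥ ((fun i => |x i|) + b))) := by
  have hinv : LipschitzWith (Real.toNNReal c⁻¹)
      (fun y : EuclideanSpace ℝ ι => toLp 2 (A⁻¹ *ᵥ ofLp y)) := by
    refine LipschitzWith.of_dist_le_mul fun x y => ?_
    rw [dist_eq_norm, dist_eq_norm, ← toLp_sub, ← mulVec_sub, ← ofLp_sub,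
      Real.coe_toNNReal _ (inv_nonneg.2 (zero_le_one.trans hc.le))]
    exact norm_toLp_inv_mulVec_le (one_pos.trans hc) hA _
  refine ⟨by simpa using inv_lt_one_of_one_lt₀ hc, ?_⟩
  simpa only [mul_one, comp_def, ofLp_add, ofLp_toLp] using
    hinv.comp ((isometry_add_right (toLp 2 b)).lipschitz.comp EuclideanSpace.lipschitzWith_abs)

theorem Matrix.isFixedPt_inv_mulVec_abs_add_iff (hA : IsUnit A) {b z : ι → ℝ} :
    IsFixedPt (fun x => A⁻¹ *ᵥ ((fun i => |x i|) + b)) z ↔ A *ᵥ z - (fun i => |z i|) = b := by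
  have hdet := (isUnit_iff_isUnit_det A).1 hA
  rw [IsFixedPt, ← (mulVec_injective_iff_isUnit.2 hA).eq_iff, mulVec_mulVec,
    mul_nonsing_inv A hdet, one_mulVec, eq_comm, sub_eq_iff_eq_add']

end

theorem picard_iteration_converges_general (n : ℕ) (A : Matrix (Fin n) (Fin n) ℝ)
    (b : Fin n → ℝ)
    (hσ : ∃ c : ℝ, 1 < c ∧ ∀ x : Fin n → ℝ,
      c * ‖(WithLp.equiv 2 (Fin n → ℝ)).symm x‖ ≤
        ‖(WithLp.equiv 2 (Fin n → ℝ)).symm (A *ᵥ x)‖) :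
    ∃ xs : Fin n → ℝ,
      (A *ᵥ xs - (fun i => |xs i|) = b) ∧
      (∀ y : Fin n → ℝ, A *ᵥ y - (fun i => |y i|) = b → y = xs) ∧
      ∀ x₀ : Fin n → ℝ,
        Tendsto (fun k => (fun x : Fin n → ℝ => A⁻¹ *ᵥ ((fun i => |x i|) + b))^[k] x₀)
          atTop (nhds xs) := by
  obtain ⟨c, hc, hbound⟩ := hσ
  have hunit : IsUnit A := isUnit_of_le_norm_toLp_mulVec (one_pos.trans hc) hbound
  obtain ⟨xs, hfix, huniq, hconv⟩ :=
    ContractingWith.exists_unique_isFixedPt_tendsto_iterate_of_semiconj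
      (contractingWith_inv_mulVec_abs_add hc hbound b) (PiLp.homeomorph 2 _)
      (f := fun x => A⁻¹ *ᵥ ((fun i => |x i|) + b)) (fun _ => rfl)
  exact ⟨xs, (isFixedPt_inv_mulVec_abs_add_iff hunit).1 hfix,
    fun y hy => huniq y ((isFixedPt_inv_mulVec_abs_add_iff hunit).2 hy), hconv⟩

theorem picard_iteration_converges (n : ℕ) (A : Matrix (Fin n) (Fin n) ℝ)
    (hA : IsUnit A) (b : Fin n → ℝ)
    (hσ : ∃ c : ℝ, 1 < c ∧ ∀ x : Fin n → ℝ,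
      c * ‖(WithLp.equiv 2 (Fin n → ℝ)).symm x‖ ≤
        ‖(WithLp.equiv 2 (Fin n → ℝ)).symm (A *ᵥ x)‖) :
    ∃ xs : Fin n → ℝ,
      (A *ᵥ xs - (fun i => |xs i|) = b) ∧
      (∀ y : Fin n → ℝ, A *ᵥ y - (fun i => |y i|) = b → y = xs) ∧
      ∀ x₀ : Fin n → ℝ,
        Tendsto (fun k => (fun x : Fin n → ℝ => A⁻¹ *ᵥ ((fun i => |x i|) + b))^[k] x₀)
          atTop (nhds xs) :=
  picard_iteration_converges_general n A b hσ
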